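/- arXiv:2001.04838 — 2 statements merged into one kernel-verified Lean document; each statement's English description precedes it below -/
import Mathlib

section
/- Let p be an odd prime and m ≥ 1 an integer. Then the twisted Kloosterman moment S(m+1,φ) := Σ_{c ∈ 𝔽_p^×} φ(c)·K(c)^{m+1} satisfies S(m+1,φ) = p·φ(−1)·Σ_{x₁,…,x_m ∈ 𝔽_p^×} φ(x₁ + x₂ + ⋯ + x_m + 1)·φ(x₁⁻¹ + x₂⁻¹ + ⋯ + x_m⁻¹ + 1). -/
open Finset

/-- The quadratic character of `ZMod p`, with values in `ℂ` (vanishing at `0`). -/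
noncomputable def Φ (p : ℕ) [Fact p.Prime] : MulChar (ZMod p) ℂ :=
  (quadraticChar (ZMod p)).ringHomComp (Int.castRingHom ℂ)

/-- The standard additive character `x ↦ e^(2πi x̃ / p)` of `ZMod p`. -/
noncomputable def θ (p : ℕ) (x : ZMod p) : ℂ :=
  Complex.exp (2 * Real.pi * Complex.I * (x.val : ℂ) / p)

/-- The Kloosterman sum `K(a) = Σ_{x ∈ 𝔽_p^×} θ(x + a x⁻¹)`. -/
noncomputable def K (p : ℕ) [Fact p.Prime] (a : ZMod p) : ℂ :=
  ∑ x ∈ univ.filter (fun x : ZMod p => x ≠ 0), θ p (x + a * x⁻¹)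

/-!
Expand `K(c)^(m+1)` as a sum over tuples `x` of units and sum over `c` first: the `c`-sum is a
twisted Gauss sum, `Σ_c χ(c) ψ(c t) = χ⁻¹(t) g(χ, ψ)`. Writing `x = (a, a y₁, …, a y_m)` gives
`Σ xᵢ = a (Σ yᵢ + 1)` and `Σ xᵢ⁻¹ = a⁻¹ (Σ yᵢ⁻¹ + 1)`, so the sum over `a` is again a Gauss sum.
What remains is `g² Σ_y χ⁻¹(Σ yᵢ + 1) χ⁻¹(Σ yᵢ⁻¹ + 1)`, and `g² = χ(-1) #F` for quadratic `χ`.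
-/

lemma AddChar.map_sum_eq_prod {ι A M : Type*} [AddCommMonoid A] [CommMonoid M]
    (ψ : AddChar A M) (s : Finset ι) (f : ι → A) : ψ (∑ i ∈ s, f i) = ∏ i ∈ s, ψ (f i) := by
  classical
  induction s using Finset.induction_on with
  | empty => simp
  | insert a s ha ih => rw [sum_insert ha, prod_insert ha, map_add_eq_mul, ih]

section SumOverUnits

variable {G₀ M : Type*} [GroupWithZero G₀] [Fintype G₀] [DecidableEq G₀] [AddCommMonoid M]

lemma sum_units_eq_sum_filter_ne_zero (f : G₀ → M) :
    ∑ x : G₀ˣ, f x = ∑ x ∈ univ.filter (· ≠ 0), f x := by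
  rw [Finset.sum_subtype (p := (· ≠ 0)) _ (fun x => by simp) f]
  exact Equiv.sum_comp unitsEquivNeZero (fun x => f x.1)

lemma sum_units_eq_sum_of_map_zero {f : G₀ → M} (hf : f 0 = 0) :
    ∑ x : G₀ˣ, f x = ∑ x, f x := by
  rw [sum_units_eq_sum_filter_ne_zero]
  exact Finset.sum_filter_of_ne fun x _ hx h => hx (h ▸ hf)

end SumOverUnits

lemma Fintype.sum_pi_fin_succ_eq_sum_cons_smul {G M : Type*} [Group G] [Fintype G]
    [AddCommMonoid M] (n : ℕ) (f : (Fin (n + 1) → G) → M) :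
    ∑ x, f x = ∑ a, ∑ y : Fin n → G, f (Fin.cons a (a • y)) := by
  rw [← (Fin.consEquiv fun _ => G).sum_comp, Fintype.sum_prod_type]
  refine Finset.sum_congr rfl fun a _ => ?_
  exact (Fintype.sum_bijective _ (MulAction.bijective a) _ _ fun _ => rfl).symm

section Kloosterman

variable {F R : Type*} [Field F] [Fintype F] [CommRing R]

lemma sum_mulChar_mul_addChar_mul [IsDomain R] {χ : MulChar F R} (hχ : χ ≠ 1)
    (ψ : AddChar F R) (t : F) :
    ∑ c, χ c * ψ (c * t) = χ⁻¹ t * gaussSum χ ψ := by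
  rcases eq_or_ne t 0 with rfl | ht
  · simp [MulChar.sum_eq_zero_of_ne_one hχ, MulChar.map_zero]
  · simpa [gaussSum, mul_comm t] using gaussSum_mulShift_eq χ ψ (Units.mk0 t ht)

variable [DecidableEq F]

def kloosterman (ψ : AddChar F R) (a : F) : R :=
  ∑ x : Fˣ, ψ (x + a * (x : F)⁻¹)

lemma kloosterman_pow (ψ : AddChar F R) (a : F) (n : ℕ) :
    kloosterman ψ a ^ n =
      ∑ x : Fin n → Fˣ, ψ (∑ i, (x i : F) + a * ∑ i, (x i : F)⁻¹) := by
  rw [kloosterman, Fintype.sum_pow]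
  refine Finset.sum_congr rfl fun x _ => ?_
  rw [← AddChar.map_sum_eq_prod, Finset.sum_add_distrib, Finset.mul_sum]

variable [IsDomain R] {χ : MulChar F R}

lemma sum_mulChar_mul_kloosterman_pow (hχ : χ ≠ 1) (ψ : AddChar F R) (n : ℕ) :
    ∑ c, χ c * kloosterman ψ c ^ n =
      gaussSum χ ψ * ∑ x : Fin n → Fˣ, ψ (∑ i, (x i : F)) * χ⁻¹ (∑ i, (x i : F)⁻¹) := by
  simp only [kloosterman_pow, Finset.mul_sum]
  rw [Finset.sum_comm]
  refine Finset.sum_congr rfl fun x _ => ?_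
  simp only [AddChar.map_add_eq_mul, mul_left_comm (χ _), ← Finset.mul_sum,
    sum_mulChar_mul_addChar_mul hχ]
  ring

lemma sum_addChar_sum_mul_inv_mulChar_sum_inv (hχ : χ ≠ 1) (ψ : AddChar F R) (n : ℕ) :
    ∑ x : Fin (n + 1) → Fˣ, ψ (∑ i, (x i : F)) * χ⁻¹ (∑ i, (x i : F)⁻¹) =
      gaussSum χ ψ * ∑ y : Fin n → Fˣ,
        χ⁻¹ (∑ i, (y i : F) + 1) * χ⁻¹ (∑ i, (y i : F)⁻¹ + 1) := by
  rw [Fintype.sum_pi_fin_succ_eq_sum_cons_smul, Finset.sum_comm, Finset.mul_sum]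
  refine Finset.sum_congr rfl fun y _ => ?_
  set A := ∑ i, (y i : F) + 1
  set B := ∑ i, (y i : F)⁻¹ + 1
  have hsum (a : Fˣ) : ∑ i, ((Fin.cons a (a • y) : Fin (n + 1) → Fˣ) i : F) = a * A := by
    simp [A, Fin.sum_univ_succ, Finset.mul_sum, mul_add, add_comm]
  have hsum_inv (a : Fˣ) :
      ∑ i, ((Fin.cons a (a • y) : Fin (n + 1) → Fˣ) i : F)⁻¹ = (a : F)⁻¹ * B := by
    simp [B, Fin.sum_univ_succ, Finset.mul_sum, mul_add, add_comm, mul_comm]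
  calc ∑ a : Fˣ, ψ (∑ i, ((Fin.cons a (a • y) : Fin (n + 1) → Fˣ) i : F)) *
          χ⁻¹ (∑ i, ((Fin.cons a (a • y) : Fin (n + 1) → Fˣ) i : F)⁻¹)
      = χ⁻¹ B * ∑ a : Fˣ, χ a * ψ (a * A) := by
        simp only [hsum, hsum_inv, Finset.mul_sum, map_mul,
          MulChar.inv_apply' χ (a := (_ : F)⁻¹), inv_inv]
        exact Finset.sum_congr rfl fun a _ => by ring
    _ = χ⁻¹ B * ∑ a, χ a * ψ (a * A) := by
        rw [sum_units_eq_sum_of_map_zero (f := fun a => χ a * ψ (a * A))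
          (by simp [MulChar.map_zero])]
    _ = gaussSum χ ψ * (χ⁻¹ A * χ⁻¹ B) := by
        rw [sum_mulChar_mul_addChar_mul hχ]
        ring

theorem sum_units_mulChar_mul_kloosterman_pow_succ (hχ : χ ≠ 1) (hχq : χ.IsQuadratic)
    {ψ : AddChar F R} (hψ : ψ.IsPrimitive) (n : ℕ) :
    ∑ c : Fˣ, χ c * kloosterman ψ c ^ (n + 1) =
      χ (-1) * Fintype.card F * ∑ y : Fin n → Fˣ,
        χ (∑ i, (y i : F) + 1) * χ (∑ i, (y i : F)⁻¹ + 1) := by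
  rw [sum_units_eq_sum_of_map_zero (f := fun c => χ c * kloosterman ψ c ^ (n + 1))
      (by simp [MulChar.map_zero]), sum_mulChar_mul_kloosterman_pow hχ,
    sum_addChar_sum_mul_inv_mulChar_sum_inv hχ, ← mul_assoc, ← sq, gaussSum_sq hχ hχq hψ, hχq.inv]

end Kloosterman

lemma θ_eq_stdAddChar (p : ℕ) [NeZero p] (x : ZMod p) : θ p x = ZMod.stdAddChar x := by
  rw [ZMod.stdAddChar_apply, ZMod.toCircle_apply, θ]

lemma K_eq_kloosterman (p : ℕ) [Fact p.Prime] (a : ZMod p) :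
    K p a = kloosterman ZMod.stdAddChar a := by
  simp only [K, kloosterman, θ_eq_stdAddChar, sum_units_eq_sum_filter_ne_zero
    (fun x => ZMod.stdAddChar (x + a * x⁻¹))]

lemma Φ_ne_one {p : ℕ} [Fact p.Prime] (hp : Odd p) : Φ p ≠ 1 := by
  have hchar : ringChar (ZMod p) ≠ 2 := by
    rw [ZMod.ringChar_zmod_n]
    rintro rfl
    simp [Nat.odd_iff] at hp
  exact (MulChar.ringHomComp_ne_one_iff Int.cast_injective).mpr (quadraticChar_ne_one hchar)

lemma Φ_isQuadratic (p : ℕ) [Fact p.Prime] : (Φ p).IsQuadratic :=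
  (quadraticChar_isQuadratic (ZMod p)).comp _

theorem twisted_kloosterman_moment_general (p : ℕ) [Fact p.Prime] (hp : Odd p)
    (m : ℕ) :
    ∑ c ∈ univ.filter (fun c : ZMod p => c ≠ 0), Φ p c * K p c ^ (m + 1) =
      (p : ℂ) * Φ p (-1) *
        ∑ x : Fin m → {c : ZMod p // c ≠ 0},
          Φ p ((∑ i, (x i : ZMod p)) + 1) * Φ p ((∑ i, ((x i : ZMod p))⁻¹) + 1) := by
  rw [← sum_units_eq_sum_filter_ne_zero (fun c => Φ p c * K p c ^ (m + 1))]
  simp only [K_eq_kloosterman]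
  rw [sum_units_mulChar_mul_kloosterman_pow_succ (χ := Φ p) (Φ_ne_one hp) (Φ_isQuadratic p)
    (ZMod.isPrimitive_stdAddChar p), ZMod.card, mul_comm (Φ p (-1)),
    ← Equiv.sum_comp ((Equiv.refl (Fin m)).arrowCongr unitsEquivNeZero)]
  rfl

/-- **Twisted Kloosterman moment (Dummit–Goldberg–Perry).** For `m ≥ 1`,
`S(m+1,φ) = Σ_{c ≠ 0} φ(c) K(c)^(m+1)
  = p φ(-1) Σ_{x₁,…,x_m ≠ 0} φ(x₁+⋯+x_m+1) φ(x₁⁻¹+⋯+x_m⁻¹+1)`. -/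
theorem twisted_kloosterman_moment (p : ℕ) [Fact p.Prime] (hp : Odd p)
    (m : ℕ) (hm : 1 ≤ m) :
    ∑ c ∈ univ.filter (fun c : ZMod p => c ≠ 0), Φ p c * K p c ^ (m + 1) =
      (p : ℂ) * Φ p (-1) *
        ∑ x : Fin m → {c : ZMod p // c ≠ 0},
          Φ p ((∑ i, (x i : ZMod p)) + 1) * Φ p ((∑ i, ((x i : ZMod p))⁻¹) + 1) :=
  twisted_kloosterman_moment_general p hp m
end

section
/- Let p be an odd prime. Then the quadratic-twisted second Kloosterman moment satisfies Σ_{a ∈ 𝔽_p^×} φ(a)·K(a)² = −p. -/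
/-!
Expanding the square and summing over `a` first turns `∑ χ(a) K(a)²` into the Gauss sum
`g = g(χ, ψ)` times `∑_{x, y ≠ 0} ψ(x + y) χ(x⁻¹ + y⁻¹)`. As `χ` is quadratic,
`χ(x⁻¹ + y⁻¹) = χ(x + y) χ(x) χ(y)`, so grouping the terms by `s = x + y` produces the Jacobi sum
`J(χ, χ) = -χ(-1)` and a second copy of `g`. Finally `g² = χ(-1) p` and `χ(-1)² = 1`.
-/

open Finset

namespace MulChar

variable {F R : Type*} [Field F] [CommRing R]

lemma IsQuadratic.map_inv {χ : MulChar F R} (hχ : χ.IsQuadratic) (a : F) : χ a⁻¹ = χ a := by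
  rw [← inv_apply', hχ.inv]

lemma IsQuadratic.map_inv_add_inv {χ : MulChar F R} (hχ : χ.IsQuadratic) {x y : F} (hx : x ≠ 0)
    (hy : y ≠ 0) : χ (x⁻¹ + y⁻¹) = χ (x + y) * (χ x * χ y) := by
  rw [show x⁻¹ + y⁻¹ = (x + y) * (x⁻¹ * y⁻¹) by field_simp; ring, map_mul, map_mul,
    hχ.map_inv, hχ.map_inv]

variable [Fintype F]

lemma sum_mul_map_sub_eq_mul_jacobiSum (χ φ : MulChar F R) {t : F} (ht : t ≠ 0) :
    ∑ x, χ x * φ (t - x) = (χ * φ) t * jacobiSum χ φ := by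
  rw [jacobiSum, mul_sum]
  refine (Fintype.sum_equiv (Equiv.mulLeft₀ t ht) _ _ fun u => ?_).symm
  rw [Equiv.mulLeft₀_apply, show t - t * u = t * (1 - u) by ring, map_mul, map_mul, coeToFun_mul,
    Pi.mul_apply]
  ring

lemma jacobiSum_self_of_isQuadratic [IsDomain R] {χ : MulChar F R} (hχ : χ ≠ 1)
    (hq : χ.IsQuadratic) : jacobiSum χ χ = -χ (-1) := by
  nth_rewrite 2 [← hq.inv]
  exact jacobiSum_nontrivial_inv hχ

end MulChar

section GaussSum

variable {F R : Type*} [Field F] [Fintype F] [CommRing R] [IsDomain R]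

lemma sum_mul_addChar_mul_eq_inv_mul_gaussSum {χ : MulChar F R} (hχ : χ ≠ 1)
    (ψ : AddChar F R) (t : F) : ∑ a, χ a * ψ (a * t) = χ⁻¹ t * gaussSum χ ψ := by
  rcases eq_or_ne t 0 with rfl | ht
  · simpa [MulChar.map_zero] using MulChar.sum_eq_zero_of_ne_one hχ
  · rw [← Units.val_mk0 ht, ← gaussSum_mulShift_eq]
    simp only [gaussSum, AddChar.mulShift_apply, mul_comm _ (_ : F)]

end GaussSum

section Kloosterman

variable {F R : Type*} [Field F] [Fintype F] [DecidableEq F] [CommRing R]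

def kloostermanSum (ψ : AddChar F R) (a : F) : R :=
  ∑ x ∈ univ.filter (· ≠ 0), ψ (x + a * x⁻¹)

lemma kloostermanSum_sq (ψ : AddChar F R) (a : F) :
    kloostermanSum ψ a ^ 2 = ∑ x ∈ univ.filter (· ≠ 0), ∑ y ∈ univ.filter (· ≠ 0),
      ψ (x + y) * ψ (a * (x⁻¹ + y⁻¹)) := by
  rw [kloostermanSum, sq, sum_mul_sum]
  refine sum_congr rfl fun x _ => sum_congr rfl fun y _ => ?_
  rw [← AddChar.map_add_eq_mul, ← AddChar.map_add_eq_mul]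
  ring_nf

variable [IsDomain R] {χ : MulChar F R}

theorem sum_mulChar_mul_kloostermanSum_sq (hχ : χ ≠ 1) (hq : χ.IsQuadratic) (ψ : AddChar F R) :
    ∑ a, χ a * kloostermanSum ψ a ^ 2 = jacobiSum χ χ * gaussSum χ ψ ^ 2 := by
  calc ∑ a, χ a * kloostermanSum ψ a ^ 2
      = ∑ x ∈ univ.filter (· ≠ 0), ∑ y ∈ univ.filter (· ≠ 0),
          ψ (x + y) * ∑ a, χ a * ψ (a * (x⁻¹ + y⁻¹)) := by
        simp only [kloostermanSum_sq, mul_sum]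
        rw [sum_comm]
        refine sum_congr rfl fun x _ => ?_
        rw [sum_comm]
        exact sum_congr rfl fun y _ => sum_congr rfl fun a _ => by ring
    _ = gaussSum χ ψ * ∑ x ∈ univ.filter (· ≠ 0), ∑ y ∈ univ.filter (· ≠ 0),
          ψ (x + y) * χ (x + y) * (χ x * χ y) := by
        rw [mul_sum]
        refine sum_congr rfl fun x hx => ?_
        rw [mul_sum]
        refine sum_congr rfl fun y hy => ?_
        rw [sum_mul_addChar_mul_eq_inv_mul_gaussSum hχ, hq.inv,
          hq.map_inv_add_inv (mem_filter.1 hx).2 (mem_filter.1 hy).2]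
        ring
    _ = gaussSum χ ψ * ∑ x, ∑ y, ψ (x + y) * χ (x + y) * (χ x * χ y) := by
        simp only [filter_ne']
        rw [sum_erase _ (by simp [MulChar.map_zero])]
        exact congrArg _ (sum_congr rfl fun x _ => sum_erase _ (by simp [MulChar.map_zero]))
    _ = gaussSum χ ψ * ∑ s, ψ s * χ s * ∑ x, χ x * χ (s - x) := by
        simp only [mul_sum]
        conv_rhs => rw [sum_comm]
        refine sum_congr rfl fun x _ => Fintype.sum_equiv (Equiv.addLeft x) _ _ fun y => ?_
        rw [Equiv.coe_addLeft, add_sub_cancel_left]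
    _ = gaussSum χ ψ * ∑ s, ψ s * χ s * jacobiSum χ χ := by
        refine congrArg _ (sum_congr rfl fun s _ => ?_)
        rcases eq_or_ne s 0 with rfl | hs
        · simp only [MulChar.map_zero, mul_zero, zero_mul]
        · rw [MulChar.sum_mul_map_sub_eq_mul_jacobiSum χ χ hs, ← sq, hq.sq_eq_one,
            MulChar.one_apply hs.isUnit, one_mul]
    _ = jacobiSum χ χ * gaussSum χ ψ ^ 2 := by
        have hg : ∑ s, ψ s * χ s = gaussSum χ ψ := sum_congr rfl fun s _ => mul_comm _ _
        rw [← sum_mul, hg]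
        ring

theorem sum_mulChar_mul_kloostermanSum_sq_eq_neg_card (hχ : χ ≠ 1) (hq : χ.IsQuadratic)
    {ψ : AddChar F R} (hψ : ψ.IsPrimitive) :
    ∑ a, χ a * kloostermanSum ψ a ^ 2 = -Fintype.card F := by
  have hsq : χ (-1) ^ 2 = 1 := by rw [← map_pow, neg_one_sq, map_one]
  rw [sum_mulChar_mul_kloostermanSum_sq hχ hq, MulChar.jacobiSum_self_of_isQuadratic hχ hq,
    gaussSum_sq hχ hq hψ]
  linear_combination -(Fintype.card F : R) * hsq

end Kloosterman

lemma K_eq_kloostermanSum (p : ℕ) [Fact p.Prime] : K p = kloostermanSum ZMod.stdAddChar := by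
  ext a
  exact sum_congr rfl fun x _ => θ_eq_stdAddChar p _

/-- **Second twisted Kloosterman moment.** `S(2,φ) = Σ_{a≠0} φ(a) K(a)² = -p`. -/
theorem twisted_second_moment (p : ℕ) [Fact p.Prime] (hp : Odd p) :
    ∑ a ∈ univ.filter (fun a : ZMod p => a ≠ 0), Φ p a * K p a ^ 2 = -(p : ℂ) := by
  have hq : (Φ p).IsQuadratic := (quadraticChar_isQuadratic _).comp _
  rw [filter_ne', sum_erase _ (by simp [MulChar.map_zero]), K_eq_kloostermanSum]
  -- `Φ p` is a character for `ZMod.commRing`, the general lemma for `Field.toCommRing`: only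
  -- defeq, so the lemma is instantiated and closes the goal rather than rewriting it.
  have h := sum_mulChar_mul_kloostermanSum_sq_eq_neg_card (Φ_ne_one hp) hq
    (ZMod.isPrimitive_stdAddChar p)
  rwa [ZMod.card] at h
end
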